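/- arXiv:1909.11884 — 2 statements merged into one kernel-verified Lean document; each statement's English description precedes it below -/
import Mathlib

section
/- Let K be a convex body in S^d and let A ⊆ S^d \ K be a finite set that illuminates K. If there exists x ∈ S^d such that A is contained in the closed hemisphere {y ∈ S^d : ⟨x,y⟩ ≥ 0} and K is contained in the open hemisphere H_x = {y ∈ S^d : ⟨x,y⟩ > 0}, then I_{S^d}(K) ≤ card(A). -/
open RealInnerProductSpace Metric Set

noncomputable section

/-- Euclidean `n`-space. -/
abbrev Euc (n : ℕ) := EuclideanSpace ℝ (Fin n)

/-- The unit sphere `S^d` in `ℝ^{d+1}`. -/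
def uSphere (d : ℕ) : Set (Euc (d + 1)) := Metric.sphere 0 1

/-- Radial (normalizing) projection onto the unit sphere. -/
def nproj {n : ℕ} (x : Euc n) : Euc n := ‖x‖⁻¹ • x

/-- The spherical segment (shorter great-circle arc) with endpoints `p` and `q`
(meaningful when `p ≠ -q`). -/
def sphSeg {n : ℕ} (p q : Euc n) : Set (Euc n) :=
  (fun t : ℝ => nproj ((1 - t) • p + t • q)) '' Set.Icc 0 1

/-- The relative interior of the spherical segment with endpoints `p` and `q`. -/
def sphOpenSeg {n : ℕ} (p q : Euc n) : Set (Euc n) :=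
  (fun t : ℝ => nproj ((1 - t) • p + t • q)) '' Set.Ioo 0 1

/-- The great circle through `p` and `q`. -/
def greatCircle (d : ℕ) (p q : Euc (d + 1)) : Set (Euc (d + 1)) :=
  {z ∈ uSphere d | z ∈ Submodule.span ℝ {p, q}}

/-- The open hemisphere with center `x`. -/
def openHemi (d : ℕ) (x : Euc (d + 1)) : Set (Euc (d + 1)) :=
  {y ∈ uSphere d | 0 < ⟪x, y⟫}

/-- The `(d-1)`-dimensional great sphere of `S^d` with pole `u`. -/
def greatSphere (d : ℕ) (u : Euc (d + 1)) : Set (Euc (d + 1)) :=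
  {y ∈ uSphere d | ⟪u, y⟫ = 0}

/-- A set `C ⊆ S^d` is spherically convex if it is contained in an open hemisphere
and contains the shorter arc connecting any two of its points. -/
def SphConvex (d : ℕ) (C : Set (Euc (d + 1))) : Prop :=
  C ⊆ uSphere d ∧ (∃ x ∈ uSphere d, C ⊆ openHemi d x) ∧
    ∀ p ∈ C, ∀ q ∈ C, sphSeg p q ⊆ C

/-- The interior of `K` relative to the sphere `S^d`. -/
def sphInt (d : ℕ) (K : Set (Euc (d + 1))) : Set (Euc (d + 1)) :=
  {x ∈ uSphere d | ∃ U : Set (Euc (d + 1)), IsOpen U ∧ x ∈ U ∧ U ∩ uSphere d ⊆ K}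

/-- The boundary of a closed set `K ⊆ S^d` relative to the sphere `S^d`. -/
def sphBd (d : ℕ) (K : Set (Euc (d + 1))) : Set (Euc (d + 1)) := K \ sphInt d K

/-- A convex body in `S^d`: a compact spherically convex set with nonempty interior
relative to `S^d`. -/
def IsSphBody (d : ℕ) (K : Set (Euc (d + 1))) : Prop :=
  IsCompact K ∧ SphConvex d K ∧ (sphInt d K).Nonempty

/-- The boundary point `q` of `K` is illuminated from the point `p`. -/
def SphIlluminated (d : ℕ) (K : Set (Euc (d + 1))) (p q : Euc (d + 1)) : Prop :=
  q ≠ -p ∧ sphSeg p q ∩ sphInt d K = ∅ ∧ (greatCircle d p q ∩ sphInt d K).Nonempty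

/-- The set `S` illuminates the convex body `K ⊆ S^d`. -/
def SphIlluminates (d : ℕ) (K S : Set (Euc (d + 1))) : Prop :=
  ∀ q ∈ sphBd d K, ∃ p ∈ S, SphIlluminated d K p q

/-- The illumination number of a convex body `K` in `S^d`: the smallest cardinality of
a set illuminating `K` and lying on a `(d-1)`-dimensional great sphere disjoint from `K`. -/
def sphIllumNumber (d : ℕ) (K : Set (Euc (d + 1))) : ℕ∞ :=
  sInf {n : ℕ∞ | ∃ u ∈ uSphere d, greatSphere d u ∩ K = ∅ ∧
    ∃ S : Finset (Euc (d + 1)), ↑S ⊆ greatSphere d u ∧ SphIlluminates d K ↑S ∧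
      (S.card : ℕ∞) = n}

/-- A convex body in a Euclidean space: compact, convex, with nonempty interior. -/
def IsConvexBody {n : ℕ} (K : Set (Euc n)) : Prop :=
  IsCompact K ∧ Convex ℝ K ∧ (interior K).Nonempty

/-- The boundary point `p` of `K` is illuminated from the direction `v`. -/
def IlluminatedDir {n : ℕ} (K : Set (Euc n)) (v p : Euc n) : Prop :=
  ∃ t : ℝ, 0 < t ∧ p + t • v ∈ interior K

/-- The finite set of unit vectors `D` illuminates the convex body `K`. -/
def IlluminatesDirs {n : ℕ} (D : Finset (Euc n)) (K : Set (Euc n)) : Prop :=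
  (∀ v ∈ D, ‖v‖ = 1) ∧ ∀ p ∈ frontier K, ∃ v ∈ D, IlluminatedDir K v p

/-- The illumination number of a convex body in Euclidean space. -/
def illumNumber {n : ℕ} (K : Set (Euc n)) : ℕ∞ :=
  sInf {m : ℕ∞ | ∃ D : Finset (Euc n), IlluminatesDirs D K ∧ (D.card : ℕ∞) = m}

/-- The illumination number of a convex body `K` of an affine subspace of a Euclidean
space, computed within the affine span of `K` (directions are parallel to the affine
span; interior and boundary are relative to the affine span). -/
def intIllumNumber {n : ℕ} (K : Set (Euc n)) : ℕ∞ :=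
  sInf {m : ℕ∞ | ∃ D : Finset (Euc n),
    (∀ v ∈ D, ‖v‖ = 1 ∧ v ∈ (affineSpan ℝ K).direction) ∧
    (∀ p ∈ intrinsicFrontier ℝ K, ∃ v ∈ D, ∃ t : ℝ, 0 < t ∧
      p + t • v ∈ intrinsicInterior ℝ K) ∧
    (D.card : ℕ∞) = m}

/-- A face of a convex body `K` in Euclidean space: a convex subset `F ⊆ K` such that
any segment of `K` whose relative interior meets `F` is contained in `F`. -/
def IsFace {n : ℕ} (K F : Set (Euc n)) : Prop :=
  F ⊆ K ∧ Convex ℝ F ∧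
    ∀ x ∈ K, ∀ y ∈ K, (openSegment ℝ x y ∩ F).Nonempty → segment ℝ x y ⊆ F

/-- The dimension of a subset of a Euclidean space (dimension of its affine hull). -/
def faceDim {n : ℕ} (F : Set (Euc n)) : ℕ := Module.finrank ℝ (vectorSpan ℝ F)

/-- A face of a convex body `K` in `S^d`: a spherically convex subset `F ⊆ K` such that
any spherical segment of `K` whose relative interior meets `F` is contained in `F`. -/
def IsSphFace (d : ℕ) (K F : Set (Euc (d + 1))) : Prop :=
  F ⊆ K ∧ SphConvex d F ∧
    ∀ p ∈ K, ∀ q ∈ K, (sphOpenSeg p q ∩ F).Nonempty → sphSeg p q ⊆ F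

/-- The (spherical) dimension of a subset `F` of `S^d`: one less than the dimension of
its linear hull. -/
def sphFaceDim (d : ℕ) (F : Set (Euc (d + 1))) : ℕ :=
  Module.finrank ℝ (Submodule.span ℝ F) - 1

/-- The polar body of a convex body `K ⊆ S^d`. -/
def sphPolar (d : ℕ) (K : Set (Euc (d + 1))) : Set (Euc (d + 1)) :=
  {x ∈ uSphere d | ∀ y ∈ K, ⟪x, y⟫ ≤ 0}

/-- An exposed face of a convex body `L` in `S^d`: a nonempty intersection of `L`
with a supporting great sphere. -/
def IsSphExposedFace (d : ℕ) (L F : Set (Euc (d + 1))) : Prop :=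
  F.Nonempty ∧ ∃ u ∈ uSphere d, (∀ y ∈ L, ⟪u, y⟫ ≤ 0) ∧ F = {y ∈ L | ⟪u, y⟫ = 0}

/-- The conjugate face of an exposed face `F` of a convex body `K ⊆ S^d`. -/
def conjFace (d : ℕ) (K F : Set (Euc (d + 1))) : Set (Euc (d + 1)) :=
  {x ∈ sphPolar d K | ∀ y ∈ F, ⟪x, y⟫ = 0}

/-- Two Euclidean convex bodies are combinatorially equivalent if there is a
homeomorphism between their boundaries mapping faces to faces. -/
def CombEquiv {n : ℕ} (K K' : Set (Euc n)) : Prop :=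
  ∃ h : (frontier K) ≃ₜ (frontier K'),
    ∀ X : Set (frontier K),
      IsFace K (Subtype.val '' X) ↔ IsFace K' (Subtype.val '' (h '' X))

/-- The combinatorial illumination number of a Euclidean convex body `K`: the smallest
number of directions that illuminate some convex body combinatorially equivalent to `K`. -/
def combIllumNumber {n : ℕ} (K : Set (Euc n)) : ℕ∞ :=
  sInf {m : ℕ∞ | ∃ K' : Set (Euc n), IsConvexBody K' ∧ CombEquiv K K' ∧
    ∃ D : Finset (Euc n), IlluminatesDirs D K' ∧ (D.card : ℕ∞) = m}

/-- A convex polytope in `S^d`: a convex body that is the intersection of finitely many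
closed hemispheres. -/
def IsSphPolytope (d : ℕ) (P : Set (Euc (d + 1))) : Prop :=
  IsSphBody d P ∧ ∃ s : Finset (Euc (d + 1)), (∀ u ∈ s, u ∈ uSphere d) ∧
    P = uSphere d ∩ {y | ∀ u ∈ s, ⟪u, y⟫ ≤ 0}

end

/-!
Fix an interior point `o` of `K` and replace each `a ∈ A` by the point where the great circle
from `o` through `a` crosses the great sphere `x^⊥`. In the cone `ℝ≥0 • K`, which is convex and
whose interior meets the sphere exactly in the interior of `K`, the point `e` illuminates the
boundary point `q` as soon as `s • q + r • e` is interior for some `r < 0 < s`. Pushing `a`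
away from `o` to the equator only adds a nonnegative multiple of `o` to such a combination, so
the new point illuminates everything `a` did, and the new points lie on a great sphere
disjoint from `K`.
-/

open Pointwise

section nproj

variable {n : ℕ} {v : Euc n}

lemma nproj_smul_of_pos {c : ℝ} (hc : 0 < c) (v : Euc n) : nproj (c • v) = nproj v := by
  rcases eq_or_ne v 0 with rfl | hv
  · simp
  · simp only [nproj, norm_smul, Real.norm_of_nonneg hc.le, smul_smul]
    field_simp

lemma norm_nproj (hv : v ≠ 0) : ‖nproj v‖ = 1 := by
  simp only [nproj, norm_smul, norm_inv, norm_norm]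
  exact inv_mul_cancel₀ (norm_ne_zero_iff.2 hv)

lemma nproj_of_norm_eq_one (hv : ‖v‖ = 1) : nproj v = v := by
  simp [nproj, hv]

lemma norm_smul_nproj (v : Euc n) : ‖v‖ • nproj v = v := by
  rcases eq_or_ne v 0 with rfl | hv
  · simp
  · rw [nproj, smul_smul, mul_inv_cancel₀ (norm_ne_zero_iff.2 hv), one_smul]

lemma ne_zero_of_norm_nproj (hv : ‖nproj v‖ = 1) : v ≠ 0 := by
  rintro rfl
  simp [nproj] at hv

end nproj

def radialCone {n : ℕ} (K : Set (Euc n)) : Set (Euc n) :=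
  {v | ∃ s : ℝ, 0 ≤ s ∧ ∃ y ∈ K, v = s • y}

section radialCone

variable {n : ℕ} {K : Set (Euc n)} {v w : Euc n} {c : ℝ}

lemma subset_radialCone : K ⊆ radialCone K :=
  fun y hy => ⟨1, zero_le_one, y, hy, (one_smul ℝ y).symm⟩

lemma smul_mem_radialCone (hc : 0 ≤ c) (hv : v ∈ radialCone K) : c • v ∈ radialCone K := by
  obtain ⟨s, hs, y, hy, rfl⟩ := hv
  exact ⟨c * s, mul_nonneg hc hs, y, hy, smul_smul c s y⟩

lemma smul_mem_interior_radialCone (hc : 0 < c) (hv : v ∈ interior (radialCone K)) :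
    c • v ∈ interior (radialCone K) := by
  have hsub : c • radialCone K ⊆ radialCone K := by
    rintro _ ⟨w, hw, rfl⟩
    exact smul_mem_radialCone hc.le hw
  refine interior_mono hsub ?_
  rw [interior_smul₀ hc.ne']
  exact smul_mem_smul_set hv

lemma smul_mem_interior_radialCone_iff (hc : 0 < c) :
    c • v ∈ interior (radialCone K) ↔ v ∈ interior (radialCone K) := by
  refine ⟨fun h => ?_, smul_mem_interior_radialCone hc⟩
  simpa [smul_smul, inv_mul_cancel₀ hc.ne'] using
    smul_mem_interior_radialCone (inv_pos.2 hc) h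

lemma mem_interior_radialCone_of_zero_mem (h0 : (0 : Euc n) ∈ interior (radialCone K))
    (v : Euc n) : v ∈ interior (radialCone K) := by
  obtain ⟨ρ, hρ, hρv⟩ :=
    (absorbent_nhds_zero (𝕜 := ℝ) (isOpen_interior.mem_nhds h0) v).exists_pos
  obtain ⟨w, hw, hwv⟩ := hρv ρ (le_abs_self ρ) (mem_singleton v)
  exact hwv ▸ smul_mem_interior_radialCone hρ hw

lemma convex_radialCone (hseg : ∀ p ∈ K, ∀ q ∈ K, sphSeg p q ⊆ K) :
    Convex ℝ (radialCone K) := by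
  rintro _ ⟨s₁, hs₁, y₁, hy₁, rfl⟩ _ ⟨s₂, hs₂, y₂, hy₂, rfl⟩ a b ha hb -
  rw [smul_smul, smul_smul]
  set c₁ := a * s₁
  set c₂ := b * s₂
  have hc₁ : 0 ≤ c₁ := mul_nonneg ha hs₁
  have hc₂ : 0 ≤ c₂ := mul_nonneg hb hs₂
  rcases (add_nonneg hc₁ hc₂).eq_or_lt with hc | hc
  · have h₁ : c₁ = 0 := by linarith
    have h₂ : c₂ = 0 := by linarith
    simpa [h₁, h₂] using smul_mem_radialCone le_rfl (subset_radialCone hy₁)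
  -- `c₁ • y₁ + c₂ • y₂` is a positive multiple of a point of the spherical segment `[y₁, y₂]`
  set t := c₂ / (c₁ + c₂)
  set p := (1 - t) • y₁ + t • y₂
  have hpK : nproj p ∈ K :=
    hseg y₁ hy₁ y₂ hy₂ ⟨t, ⟨by positivity, div_le_one_of_le₀ (by linarith) hc.le⟩, rfl⟩
  have hp : c₁ • y₁ + c₂ • y₂ = (c₁ + c₂) • p := by
    simp only [p, t, smul_add, smul_smul]
    congr 2 <;> field_simp; ring
  refine ⟨(c₁ + c₂) * ‖p‖, by positivity, nproj p, hpK, ?_⟩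
  rw [hp, mul_smul, norm_smul_nproj]

lemma add_mem_interior_radialCone (hseg : ∀ p ∈ K, ∀ q ∈ K, sphSeg p q ⊆ K)
    (hv : v ∈ radialCone K) (hw : w ∈ interior (radialCone K)) :
    v + w ∈ interior (radialCone K) := by
  have h := (convex_radialCone hseg).combo_self_interior_mem_interior hv hw
    (by norm_num : (0 : ℝ) ≤ 1 / 2) (by norm_num : (0 : ℝ) < 1 / 2) (by norm_num)
  simpa [← smul_add, smul_smul] using smul_mem_interior_radialCone two_pos h

end radialCone

section sphInt

variable {d : ℕ} {K : Set (Euc (d + 1))} {v : Euc (d + 1)}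

lemma sphInt_subset : sphInt d K ⊆ K :=
  fun _ ⟨hz, _, _, hzU, hUK⟩ => hUK ⟨hzU, hz⟩

lemma mem_sphInt_iff (hKs : K ⊆ uSphere d) (hv : ‖v‖ = 1) :
    v ∈ sphInt d K ↔ v ∈ interior (radialCone K) := by
  have hvS : v ∈ uSphere d := mem_sphere_zero_iff_norm.2 hv
  constructor
  · rintro ⟨-, U, hU, hvU, hUK⟩
    refine mem_interior.2 ⟨{w | w ≠ 0} ∩ nproj ⁻¹' U, ?_, ?_, ?_⟩
    · rintro w ⟨hw, hwU⟩
      exact ⟨‖w‖, norm_nonneg w, nproj w, hUK ⟨hwU, mem_sphere_zero_iff_norm.2 (norm_nproj hw)⟩,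
        (norm_smul_nproj w).symm⟩
    · refine ContinuousOn.isOpen_inter_preimage ?_ isOpen_compl_singleton hU
      exact (continuousOn_id.norm.inv₀ fun w hw => norm_ne_zero_iff.2 hw).smul continuousOn_id
    · exact ⟨ne_zero_of_norm_ne_zero (by rw [hv]; exact one_ne_zero),
        by rwa [mem_preimage, nproj_of_norm_eq_one hv]⟩
  · refine fun h => ⟨hvS, interior (radialCone K), isOpen_interior, h, ?_⟩
    rintro _ ⟨hw, hwS⟩
    obtain ⟨s, hs, y, hy, rfl⟩ := interior_subset hw
    have hs1 : s = 1 := by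
      simpa [norm_smul, mem_sphere_zero_iff_norm.1 (hKs hy), abs_of_nonneg hs] using
        mem_sphere_zero_iff_norm.1 hwS
    rwa [hs1, one_smul]

lemma nproj_mem_sphInt_iff (hKs : K ⊆ uSphere d) (hv : v ≠ 0) :
    nproj v ∈ sphInt d K ↔ v ∈ interior (radialCone K) := by
  rw [mem_sphInt_iff hKs (norm_nproj hv), nproj,
    smul_mem_interior_radialCone_iff (inv_pos.2 (norm_pos_iff.2 hv))]

end sphInt

section illumination

variable {d : ℕ} {K : Set (Euc (d + 1))} {x o a e q : Euc (d + 1)}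

lemma SphIlluminated.exists_smul_add_smul_mem_interior (hKs : K ⊆ uSphere d)
    (hseg : ∀ p ∈ K, ∀ q ∈ K, sphSeg p q ⊆ K) (hKx : K ⊆ openHemi d x)
    (ha : ‖a‖ = 1) (haK : a ∉ K) (hax : 0 ≤ ⟪x, a⟫) (hq : q ∈ K)
    (h : SphIlluminated d K a q) :
    ∃ r s : ℝ, r < 0 ∧ 0 < s ∧ r • a + s • q ∈ interior (radialCone K) := by
  obtain ⟨-, hmiss, w, ⟨hwS, hw⟩, hwint⟩ := h
  obtain ⟨r, s, rfl⟩ := Submodule.mem_span_pair.1 hw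
  have hwn : ‖r • a + s • q‖ = 1 := mem_sphere_zero_iff_norm.1 hwS
  have hwI := (mem_sphInt_iff hKs hwn).1 hwint
  have hqx : 0 < ⟪x, q⟫ := (hKx hq).2
  have hwx : 0 < r * ⟪x, a⟫ + s * ⟪x, q⟫ := by
    simpa [inner_add_right, real_inner_smul_right] using (hKx (sphInt_subset hwint)).2
  have hr : r < 0 := by
    by_contra! hr
    rcases le_or_gt 0 s with hs | hs
    · -- `r • a + s • q` would lie on the segment from `a` to `q`
      have hrs : 0 < r + s := by
        by_contra! hrs
        obtain ⟨rfl, rfl⟩ : r = 0 ∧ s = 0 := ⟨by linarith, by linarith⟩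
        simp at hwx
      have hcomb : (1 - s / (r + s)) • a + (s / (r + s)) • q = (r + s)⁻¹ • (r • a + s • q) := by
        match_scalars <;> field_simp; ring
      refine eq_empty_iff_forall_notMem.1 hmiss _ ⟨⟨s / (r + s), ⟨by positivity, ?_⟩, ?_⟩, hwint⟩
      · exact div_le_one_of_le₀ (by linarith) hrs.le
      · simp only [hcomb, nproj_smul_of_pos (inv_pos.2 hrs), nproj_of_norm_eq_one hwn]
    · -- `a` would be an interior point of the cone
      have hr : 0 < r := hr.lt_of_ne fun h => by subst h; nlinarith
      have haI : a ∈ interior (radialCone K) := by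
        have h := add_mem_interior_radialCone hseg
          (smul_mem_radialCone (neg_nonneg.2 hs.le) (subset_radialCone hq)) hwI
        rw [← smul_mem_interior_radialCone_iff hr]
        convert h using 1
        module
      exact haK (sphInt_subset ((mem_sphInt_iff hKs ha).2 haI))
  have hs : 0 < s := by nlinarith
  exact ⟨r, s, hr, hs, hwI⟩

lemma sphIlluminated_of_smul_add_smul_mem_interior (hKs : K ⊆ uSphere d)
    (hseg : ∀ p ∈ K, ∀ q ∈ K, sphSeg p q ⊆ K) (hq : q ∈ sphBd d K) {r s : ℝ}
    (hr : r < 0) (hs : 0 < s) (hZ : s • q + r • e ∈ interior (radialCone K)) :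
    SphIlluminated d K e q := by
  have hqI : q ∉ interior (radialCone K) := fun h =>
    hq.2 ((mem_sphInt_iff hKs (mem_sphere_zero_iff_norm.1 (hKs hq.1))).2 h)
  -- `q` is a positive combination of `s • q + r • e` and any point of the segment `[e, q]`
  have hsegI : ∀ t ∈ Icc (0 : ℝ) 1, (1 - t) • e + t • q ∉ interior (radialCone K) := by
    rintro t ⟨ht0, ht1⟩ hv
    have hc : 0 < -r * t + (1 - t) * s := by
      rcases ht0.eq_or_lt with rfl | ht
      · simpa using hs
      · nlinarith [mul_pos (neg_pos.2 hr) ht, mul_nonneg (sub_nonneg.2 ht1) hs.le]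
    refine hqI ((smul_mem_interior_radialCone_iff hc).1 ?_)
    have h := add_mem_interior_radialCone hseg
      (smul_mem_radialCone (sub_nonneg.2 ht1) (interior_subset hZ))
      (smul_mem_interior_radialCone (neg_pos.2 hr) hv)
    convert h using 1
    module
  refine ⟨fun hqe => hqI ?_, eq_empty_iff_forall_notMem.2 ?_, ?_⟩
  · have h : (s - r) • q = s • q + r • e := by rw [hqe]; module
    exact (smul_mem_interior_radialCone_iff (by linarith)).1 (h ▸ hZ)
  · rintro _ ⟨⟨t, ht, rfl⟩, hm⟩
    have hv : (1 - t) • e + t • q ≠ 0 := ne_zero_of_norm_nproj (mem_sphere_zero_iff_norm.1 hm.1)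
    exact hsegI t ht ((nproj_mem_sphInt_iff hKs hv).1 hm)
  · have hZ0 : s • q + r • e ≠ 0 := fun h =>
      hqI (mem_interior_radialCone_of_zero_mem (h ▸ hZ) q)
    refine ⟨nproj (s • q + r • e), ⟨mem_sphere_zero_iff_norm.2 (norm_nproj hZ0), ?_⟩,
      (nproj_mem_sphInt_iff hKs hZ0).2 hZ⟩
    refine Submodule.smul_mem _ _ (add_mem (Submodule.smul_mem _ _ ?_) (Submodule.smul_mem _ _ ?_))
    · exact Submodule.subset_span (by simp)
    · exact Submodule.subset_span (by simp)

end illumination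

/-- The point where the great circle from `o` through `a` crosses the great sphere with pole `x`
(on the side of `a`); it is `a` itself when `⟪x, a⟫ = 0`. -/
noncomputable def equatorPoint {n : ℕ} (x o a : Euc n) : Euc n := nproj (a - (⟪x, a⟫ / ⟪x, o⟫) • o)

lemma sub_smul_ne_zero_of_norm_eq_one {n : ℕ} {a o : Euc n} {c : ℝ} (hc : 0 ≤ c)
    (ha : ‖a‖ = 1) (ho : ‖o‖ = 1) (hao : a ≠ o) : a - c • o ≠ 0 := by
  intro h
  rw [sub_eq_zero] at h
  have hc1 : c = 1 := by simpa [ha, ho, norm_smul, abs_of_nonneg hc] using (congrArg norm h).symm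
  exact hao (by rw [h, hc1, one_smul])

section equatorPoint

variable {d : ℕ} {K : Set (Euc (d + 1))} {x o a q : Euc (d + 1)}

lemma equatorPoint_mem_greatSphere (hox : 0 < ⟪x, o⟫) (hax : 0 ≤ ⟪x, a⟫)
    (ho : ‖o‖ = 1) (ha : ‖a‖ = 1) (hao : a ≠ o) : equatorPoint x o a ∈ greatSphere d x := by
  have hD := sub_smul_ne_zero_of_norm_eq_one (div_nonneg hax hox.le) ha ho hao
  refine ⟨mem_sphere_zero_iff_norm.2 (norm_nproj hD), ?_⟩
  simp only [equatorPoint, nproj, real_inner_smul_right, inner_sub_right]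
  field_simp
  ring

lemma sphIlluminated_equatorPoint (hKs : K ⊆ uSphere d)
    (hseg : ∀ p ∈ K, ∀ q ∈ K, sphSeg p q ⊆ K) (hKx : K ⊆ openHemi d x)
    (ho : o ∈ sphInt d K) (ha : ‖a‖ = 1) (haK : a ∉ K) (hax : 0 ≤ ⟪x, a⟫)
    (hq : q ∈ sphBd d K) (h : SphIlluminated d K a q) :
    SphIlluminated d K (equatorPoint x o a) q := by
  obtain ⟨r, s, hr, hs, hw⟩ :=
    h.exists_smul_add_smul_mem_interior hKs hseg hKx ha haK hax hq.1
  have hoK := sphInt_subset ho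
  have hox : 0 < ⟪x, o⟫ := (hKx hoK).2
  set c := ⟪x, a⟫ / ⟪x, o⟫
  have hc : 0 ≤ c := div_nonneg hax hox.le
  have hD : a - c • o ≠ 0 := sub_smul_ne_zero_of_norm_eq_one hc ha
    (mem_sphere_zero_iff_norm.1 (hKs hoK)) fun h => haK (h ▸ hoK)
  refine sphIlluminated_of_smul_add_smul_mem_interior hKs hseg hq
    (mul_neg_of_neg_of_pos hr (norm_pos_iff.2 hD)) hs ?_
  have hZ : s • q + (r * ‖a - c • o‖) • equatorPoint x o a = (-r * c) • o + (r • a + s • q) := by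
    rw [mul_smul, equatorPoint, norm_smul_nproj]
    module
  rw [hZ]
  exact add_mem_interior_radialCone hseg
    (smul_mem_radialCone (mul_nonneg (neg_nonneg.2 hr.le) hc) (subset_radialCone hoK)) hw

end equatorPoint

/-- If a finite set `A ⊆ S^d \ K` illuminates `K` and `A` is contained in a closed
hemisphere whose open counterpart contains `K`, then `I_{S^d}(K) ≤ card A`. -/
theorem stmt5 (d : ℕ) (K : Set (Euc (d + 1))) (hK : IsSphBody d K)
    (A : Finset (Euc (d + 1))) (hA : ↑A ⊆ uSphere d \ K)
    (hIll : SphIlluminates d K ↑A)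
    (x : Euc (d + 1)) (hx : x ∈ uSphere d)
    (hAx : ∀ a ∈ A, 0 ≤ ⟪x, a⟫) (hKx : K ⊆ openHemi d x) :
    sphIllumNumber d K ≤ (A.card : ℕ∞) := by
  classical
  obtain ⟨-, ⟨hKs, -, hseg⟩, o, ho⟩ := hK
  have hoK := sphInt_subset ho
  have hA' : ∀ a ∈ A, ‖a‖ = 1 ∧ a ∉ K := fun a ha =>
    ⟨mem_sphere_zero_iff_norm.1 (hA ha).1, (hA ha).2⟩
  refine le_trans (sInf_le (a := ((A.image (equatorPoint x o)).card : ℕ∞)) ?_)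
    (by exact_mod_cast A.card_image_le)
  refine ⟨x, hx, ?_, _, ?_, ?_, rfl⟩
  · exact eq_empty_iff_forall_notMem.2 fun y ⟨⟨_, hy⟩, hyK⟩ => (hKx hyK).2.ne' hy
  · intro _ hb
    obtain ⟨a, haA, rfl⟩ := Finset.mem_image.1 hb
    exact equatorPoint_mem_greatSphere (hKx hoK).2 (hAx a haA)
      (mem_sphere_zero_iff_norm.1 (hKs hoK)) (hA' a haA).1 fun h => (hA' a haA).2 (h ▸ hoK)
  · intro q hq
    obtain ⟨a, haA, h⟩ := hIll q hq
    exact ⟨_, Finset.mem_image_of_mem _ haA,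
      sphIlluminated_equatorPoint hKs hseg hKx ho (hA' a haA).1 (hA' a haA).2 (hAx a haA) hq h⟩
end

section
/- Let d > 2 and let P be a convex polytope in S^d, i.e., a convex body in S^d that is an intersection of finitely many closed hemispheres. Then there exist a point x in the interior of P and d+1 open hemispheres of S^d whose boundary great spheres all contain x, such that every proper face of P is contained in at least one of the d+1 open hemispheres. -/
open RealInnerProductSpace Metric Set

/-!
Write `P = S^d ∩ C` with `C = {z | ⟪u, z⟫ ≤ 0 for u ∈ s}`, a pointed polyhedral cone with
nonempty interior. A nonempty proper face of `P` lies in a facet `C ∩ uᗮ`, so it suffices to find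
an interior vector `x` of `C` and `d + 1` functionals vanishing at `x` such that each facet minus
`0` is positive for one of them. This is proved by induction on the dimension.

Let `p` be an extreme ray of `C`, i.e. an extreme point of the compact slice `⟪c, ·⟫ = 1`,
`c = -∑ u`. The functional `g = -∑ u` over the constraints active at `p` is nonnegative on `C`
and vanishes only along `ℝ₊ p` (the active constraints span `pᗮ`), so it is positive on the
facets avoiding `p`; subtracting a small multiple of `c` makes it vanish at any `x` close to `p`.
The constraints active at `p` define, inside `pᗮ`, a pointed cone of one dimension less;
induction gives `x'` and `d` functionals there, `x = p + ε x'` is interior for small `ε > 0`,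
and the projected functionals plus a small multiple of the component of `p` orthogonal to `x`
are positive on the facets through `p`, including the ray `ℝ₊ p` itself.
-/

open Module Filter Topology

section Compactness

variable {X Y : Type*} [TopologicalSpace X] [TopologicalSpace Y] {K : Set Y}

lemma IsCompact.eventually_forall_lt (hK : IsCompact K) {f : Y → ℝ} (hf : ContinuousOn f K)
    {g : X → ℝ} {x₀ : X} (hg : ContinuousAt g x₀) (h : ∀ z ∈ K, g x₀ < f z) :
    ∀ᶠ x in 𝓝 x₀, ∀ z ∈ K, g x < f z := by
  rcases K.eq_empty_or_nonempty with rfl | hne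
  · simp
  obtain ⟨z₀, hz₀, hmin⟩ := hK.exists_isMinOn hne hf
  filter_upwards [hg.eventually (gt_mem_nhds (h z₀ hz₀))] with x hx z hz
  exact hx.trans_le (hmin hz)

lemma IsCompact.eventually_pos_add_mul (hK : IsCompact K) {φ ψ : Y → ℝ} (hφ : Continuous φ)
    (hψ : Continuous ψ) (h0 : ∀ z ∈ K, 0 ≤ φ z) (h1 : ∀ z ∈ K, φ z = 0 → 0 < ψ z) :
    ∀ᶠ a in 𝓝[>] (0 : ℝ), ∀ z ∈ K, 0 < φ z + a * ψ z := by
  have : ∀ᶠ a in 𝓝 (0 : ℝ), ∀ z ∈ K, z ∈ K → 0 < a → 0 < φ z + a * ψ z := by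
    refine hK.eventually_forall_of_forall_eventually fun y hy => ?_
    rcases (h0 y hy).lt_or_eq with hpos | hzero
    · have : ContinuousAt (fun x : ℝ × Y => φ x.2 + x.1 * ψ x.2) (0, y) := by fun_prop
      filter_upwards [this.eventually (lt_mem_nhds (by simpa using hpos))] with x hx _ _
      exact hx
    · have : ContinuousAt (fun x : ℝ × Y => ψ x.2) (0, y) := by fun_prop
      filter_upwards [this.eventually (lt_mem_nhds (h1 y hy hzero.symm))] with x hx hxK ha
      exact add_pos_of_nonneg_of_pos (h0 _ hxK) (mul_pos ha hx)
  filter_upwards [eventually_nhdsWithin_of_eventually_nhds this, self_mem_nhdsWithin]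
    with a ha ha0 z hz using ha z hz hz ha0

end Compactness

noncomputable section PolyCone

variable {V : Type*} [NormedAddCommGroup V] [InnerProductSpace ℝ V]

def polyCone (W : Submodule ℝ V) (s : Finset V) : Set V :=
  {z | z ∈ W ∧ ∀ u ∈ s, ⟪u, z⟫ ≤ 0}

/-- Equivalently, `polyCone W s ∩ -polyCone W s = {0}`. -/
def IsPointedPolyCone (W : Submodule ℝ V) (s : Finset V) : Prop :=
  ∀ w ∈ W, (∀ u ∈ s, ⟪u, w⟫ = 0) → w = 0

def coneSlice (W : Submodule ℝ V) (s : Finset V) : Set V :=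
  {z | z ∈ polyCone W s ∧ ⟪-∑ u ∈ s, u, z⟫ = 1}

def activeSet (s : Finset V) (p : V) : Finset V :=
  s.filter fun u => ⟪u, p⟫ = 0

def HasFacetCover (W : Submodule ℝ V) (s : Finset V) (n : ℕ) : Prop :=
  ∃ x ∈ W, (∀ u ∈ s, ⟪u, x⟫ < 0) ∧ ∃ ℓ : Fin n → V, (∀ i, ⟪ℓ i, x⟫ = 0) ∧
    ∀ u ∈ s, ∃ i, ∀ z ∈ polyCone W s, ⟪u, z⟫ = 0 → z ≠ 0 → 0 < ⟪ℓ i, z⟫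

variable {W : Submodule ℝ V} {s : Finset V}

lemma mem_activeSet {p u : V} : u ∈ activeSet s p ↔ u ∈ s ∧ ⟪u, p⟫ = 0 :=
  Finset.mem_filter

lemma smul_mem_polyCone {z : V} (hz : z ∈ polyCone W s) {t : ℝ} (ht : 0 ≤ t) :
    t • z ∈ polyCone W s :=
  ⟨W.smul_mem t hz.1, fun u hu => by
    rw [real_inner_smul_right]; exact mul_nonpos_of_nonneg_of_nonpos ht (hz.2 u hu)⟩

lemma isClosed_polyCone [FiniteDimensional ℝ V] : IsClosed (polyCone W s) := by
  have : polyCone W s = (W : Set V) ∩ ⋂ u ∈ s, {z | ⟪u, z⟫ ≤ 0} := by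
    ext z; simp [polyCone]
  rw [this]
  exact W.closed_of_finiteDimensional.inter <|
    isClosed_biInter fun u _ => isClosed_le (by fun_prop) continuous_const

lemma inner_neg_sum_nonneg {t : Finset V} {z : V} (h : ∀ u ∈ t, ⟪u, z⟫ ≤ 0) :
    0 ≤ ⟪-∑ u ∈ t, u, z⟫ := by
  rw [inner_neg_left, sum_inner, neg_nonneg]
  exact Finset.sum_nonpos h

lemma inner_neg_sum_eq_zero_iff {t : Finset V} {z : V} (h : ∀ u ∈ t, ⟪u, z⟫ ≤ 0) :
    ⟪-∑ u ∈ t, u, z⟫ = 0 ↔ ∀ u ∈ t, ⟪u, z⟫ = 0 := by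
  rw [inner_neg_left, sum_inner, neg_eq_zero]
  exact Finset.sum_eq_zero_iff_of_nonpos h

lemma inner_neg_sum_pos (hpt : IsPointedPolyCone W s) {z : V} (hz : z ∈ polyCone W s)
    (hz0 : z ≠ 0) : 0 < ⟪-∑ u ∈ s, u, z⟫ :=
  (inner_neg_sum_nonneg hz.2).lt_of_ne fun h =>
    hz0 (hpt z hz.1 ((inner_neg_sum_eq_zero_iff hz.2).mp h.symm))

lemma smul_mem_coneSlice (hpt : IsPointedPolyCone W s) {z : V} (hz : z ∈ polyCone W s)
    (hz0 : z ≠ 0) : ⟪-∑ u ∈ s, u, z⟫⁻¹ • z ∈ coneSlice W s := by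
  have hc := inner_neg_sum_pos hpt hz hz0
  refine ⟨smul_mem_polyCone hz (inv_nonneg.mpr hc.le), ?_⟩
  rw [real_inner_smul_right, inv_mul_cancel₀ hc.ne']

lemma pos_of_forall_coneSlice (hpt : IsPointedPolyCone W s) {u ℓ : V}
    (h : ∀ z ∈ coneSlice W s, ⟪u, z⟫ = 0 → 0 < ⟪ℓ, z⟫) :
    ∀ z ∈ polyCone W s, ⟪u, z⟫ = 0 → z ≠ 0 → 0 < ⟪ℓ, z⟫ := by
  intro z hz huz hz0
  have hc := inner_neg_sum_pos hpt hz hz0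
  have := h _ (smul_mem_coneSlice hpt hz hz0) (by rw [real_inner_smul_right, huz, mul_zero])
  rw [real_inner_smul_right] at this
  exact pos_of_mul_pos_right this (inv_nonneg.mpr hc.le)

lemma isCompact_coneSlice [FiniteDimensional ℝ V] (hpt : IsPointedPolyCone W s) :
    IsCompact (coneSlice W s) := by
  set c : V := -∑ u ∈ s, u
  have hclosed : IsClosed (coneSlice W s) :=
    isClosed_polyCone.inter (isClosed_eq (by fun_prop) continuous_const)
  -- the slice is the radial image of the compact set of unit vectors of the cone
  refine ((isCompact_sphere (0 : V) 1).inter_left (isClosed_polyCone (W := W) (s := s))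
    |>.image_of_continuousOn (f := fun z => ⟪c, z⟫⁻¹ • z) ?_).of_isClosed_subset hclosed ?_
  · refine fun z hz => ContinuousAt.continuousWithinAt ?_
    have : ⟪c, z⟫ ≠ 0 :=
      (inner_neg_sum_pos hpt hz.1 (ne_zero_of_mem_unit_sphere ⟨z, hz.2⟩)).ne'
    fun_prop (disch := assumption)
  · rintro z ⟨hz, hcz : ⟪c, z⟫ = 1⟩
    have hz0 : z ≠ 0 := by rintro rfl; simp at hcz
    refine ⟨‖z‖⁻¹ • z, ⟨smul_mem_polyCone hz (by positivity), ?_⟩, ?_⟩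
    · simp [norm_smul, hz0]
    · dsimp only
      rw [real_inner_smul_right, hcz, mul_one, inv_inv, smul_smul,
        mul_inv_cancel₀ (norm_ne_zero_iff.mpr hz0), one_smul]

lemma exists_eq_smul_of_mem_extremePoints {p : V} (hp : p ∈ (coneSlice W s).extremePoints ℝ)
    {w : V} (hw : w ∈ W) (h : ∀ u ∈ activeSet s p, ⟪u, w⟫ = 0) : ∃ t : ℝ, w = t • p := by
  obtain ⟨⟨hpC, hpc⟩, hext⟩ := hp
  set c : V := -∑ u ∈ s, u
  set w' := w - ⟪c, w⟫ • p
  have hmem : ∀ᶠ t in 𝓝 (0 : ℝ), p + t • w' ∈ coneSlice W s := by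
    have hC : ∀ᶠ t in 𝓝 (0 : ℝ), ∀ u ∈ s, ⟪u, p + t • w'⟫ ≤ 0 := by
      refine (eventually_all_finset s).mpr fun u hu => ?_
      rcases (hpC.2 u hu).lt_or_eq with hlt | heq
      · have : ContinuousAt (fun t : ℝ => ⟪u, p + t • w'⟫) 0 := by fun_prop
        exact (this.eventually (gt_mem_nhds (by simpa using hlt))).mono fun _ h => h.le
      · have huw := h u (mem_activeSet.mpr ⟨hu, heq⟩)
        exact Eventually.of_forall fun t => by
          simp [w', inner_add_right, inner_sub_right, real_inner_smul_right, heq, huw]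
    filter_upwards [hC] with t ht
    refine ⟨⟨W.add_mem hpC.1 (W.smul_mem t (W.sub_mem hw (W.smul_mem _ hpC.1))), ht⟩, ?_⟩
    change ⟪c, _⟫ = 1 at hpc ⊢
    simp [w', inner_add_right, inner_sub_right, real_inner_smul_right, hpc]
  have hneg : ∀ᶠ t in 𝓝 (0 : ℝ), p + (-t) • w' ∈ coneSlice W s :=
    (continuous_neg.tendsto' 0 0 neg_zero).eventually hmem
  obtain ⟨t, ⟨h₁, h₂⟩, ht⟩ :=
    ((hmem.and hneg).filter_mono nhdsWithin_le_nhds |>.and self_mem_nhdsWithin).exists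
      (f := 𝓝[≠] (0 : ℝ))
  have := (hext h₁ h₂ ⟨1 / 2, 1 / 2, by norm_num, by norm_num, by norm_num, by module⟩)
  rw [add_eq_left, smul_eq_zero] at this
  exact ⟨⟪c, w⟫, sub_eq_zero.mp (this.resolve_left ht)⟩

lemma inner_neg_sum_activeSet_pos {p : V} (hp : p ∈ (coneSlice W s).extremePoints ℝ) {u : V}
    (hup : ⟪u, p⟫ ≠ 0) {z : V} (hz : z ∈ coneSlice W s) (huz : ⟪u, z⟫ = 0) :
    0 < ⟪-∑ u ∈ activeSet s p, u, z⟫ := by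
  have hle : ∀ u ∈ activeSet s p, ⟪u, z⟫ ≤ 0 := fun u hu => hz.1.2 u (mem_activeSet.mp hu).1
  refine (inner_neg_sum_nonneg hle).lt_of_ne fun h => ?_
  obtain ⟨t, rfl⟩ :=
    exists_eq_smul_of_mem_extremePoints hp hz.1.1 ((inner_neg_sum_eq_zero_iff hle).mp h.symm)
  rw [real_inner_smul_right, mul_eq_zero, or_iff_left hup] at huz
  simpa [huz] using hz.2

lemma eventually_exists_cover_inactive [FiniteDimensional ℝ V] (hpt : IsPointedPolyCone W s)
    {p : V} (hp : p ∈ (coneSlice W s).extremePoints ℝ) :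
    ∀ᶠ x in 𝓝 p, ∃ ℓ₀ : V, ⟪ℓ₀, x⟫ = 0 ∧
      ∀ u ∈ s, ⟪u, p⟫ ≠ 0 → ∀ z ∈ coneSlice W s, ⟪u, z⟫ = 0 → 0 < ⟪ℓ₀, z⟫ := by
  set c : V := -∑ u ∈ s, u
  set g : V := -∑ u ∈ activeSet s p, u
  have hcp : ⟪c, p⟫ ≠ 0 := by rw [hp.1.2]; exact one_ne_zero
  have hgp : ⟪g, p⟫ = 0 := by
    simp only [g, inner_neg_left, sum_inner, neg_eq_zero]
    exact Finset.sum_eq_zero fun u hu => (mem_activeSet.mp hu).2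
  have hcont : ContinuousAt (fun x => ⟪g, x⟫ / ⟪c, x⟫) p := by fun_prop (disch := exact hcp)
  -- `⟪g, x⟫ / ⟪c, x⟫ → 0` as `x → p`, while `g` has a positive minimum on each facet avoiding `p`
  have hfacets : ∀ u ∈ s, ⟪u, p⟫ ≠ 0 → ∀ᶠ x in 𝓝 p,
      ∀ z ∈ {z ∈ coneSlice W s | ⟪u, z⟫ = 0}, ⟪g, x⟫ / ⟪c, x⟫ < ⟪g, z⟫ := fun u hu hup =>
    ((isCompact_coneSlice hpt).inter_right (isClosed_eq (by fun_prop) continuous_const)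
      ).eventually_forall_lt (by fun_prop : Continuous fun z => ⟪g, z⟫).continuousOn hcont
      fun z hz => by
        rw [hgp, zero_div]; exact inner_neg_sum_activeSet_pos hp hup hz.1 hz.2
  have hcx : ∀ᶠ x in 𝓝 p, ⟪c, x⟫ ≠ 0 :=
    (continuous_const.inner continuous_id).continuousAt.eventually_ne hcp
  filter_upwards [(eventually_all_finset s).mpr fun u hu => eventually_imp_distrib_left.mpr
    (hfacets u hu), hcx] with x hx hcx
  refine ⟨g - (⟪g, x⟫ / ⟪c, x⟫) • c, ?_, fun u hu hup z hz huz => ?_⟩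
  · rw [inner_sub_left, real_inner_smul_left, div_mul_cancel₀ _ hcx, sub_self]
  · rw [inner_sub_left, real_inner_smul_left, hz.2, mul_one, sub_pos]
    exact hx u hu hup z ⟨hz, huz⟩

lemma inner_starProjection_orthogonal_singleton {p u : V} (hu : ⟪u, p⟫ = 0) (z : V) :
    ⟪u, (ℝ ∙ p)ᗮ.starProjection z⟫ = ⟪u, z⟫ := by
  rw [← Submodule.inner_starProjection_left_eq_right, Submodule.starProjection_eq_self_iff.mpr
    (Submodule.mem_orthogonal_singleton_iff_inner_right.mpr (by rwa [real_inner_comm]))]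

lemma starProjection_orthogonal_singleton_mem {p z : V} (hp : p ∈ W) (hz : z ∈ W) :
    (ℝ ∙ p)ᗮ.starProjection z ∈ (ℝ ∙ p)ᗮ ⊓ W := by
  refine ⟨Submodule.starProjection_apply_mem _ _, ?_⟩
  rw [Submodule.starProjection_orthogonal_val]
  exact W.sub_mem hz ((Submodule.span_singleton_le_iff_mem _ _).mpr hp
    (Submodule.starProjection_apply_mem _ _))

lemma eq_smul_of_starProjection_orthogonal_singleton_eq_zero [FiniteDimensional ℝ V] {p z : V}
    (h : (ℝ ∙ p)ᗮ.starProjection z = 0) : ∃ t : ℝ, z = t • p := by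
  rw [Submodule.starProjection_apply_eq_zero_iff, Submodule.orthogonal_orthogonal,
    Submodule.mem_span_singleton] at h
  exact h.imp fun _ h => h.symm

lemma eventually_cover_active_facet [FiniteDimensional ℝ V] (hpt : IsPointedPolyCone W s)
    {p : V} (hp : p ∈ coneSlice W s) {u : V} (hu : u ∈ activeSet s p) {ℓ : V}
    (hℓ : ∀ w ∈ polyCone ((ℝ ∙ p)ᗮ ⊓ W) (activeSet s p), ⟪u, w⟫ = 0 → w ≠ 0 → 0 < ⟪ℓ, w⟫)
    {q : V} (hq : 0 < ⟪q, p⟫) :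
    ∀ᶠ a in 𝓝[>] (0 : ℝ), ∀ z ∈ coneSlice W s, ⟪u, z⟫ = 0 →
      0 < ⟪(ℝ ∙ p)ᗮ.starProjection ℓ + a • q, z⟫ := by
  set π := (ℝ ∙ p)ᗮ.starProjection
  have hπ : ∀ z ∈ coneSlice W s, ⟪u, z⟫ = 0 → π z ≠ 0 → 0 < ⟪ℓ, π z⟫ := by
    intro z hz huz hπz
    refine hℓ _ ⟨starProjection_orthogonal_singleton_mem hp.1.1 hz.1.1, fun u' hu' => ?_⟩ ?_ hπz
    · rw [inner_starProjection_orthogonal_singleton (mem_activeSet.mp hu').2]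
      exact hz.1.2 u' (mem_activeSet.mp hu').1
    · rwa [inner_starProjection_orthogonal_singleton (mem_activeSet.mp hu).2]
  have hπ0 : ∀ z ∈ coneSlice W s, π z = 0 → z = p := by
    intro z hz hπz
    obtain ⟨t, rfl⟩ := eq_smul_of_starProjection_orthogonal_singleton_eq_zero hπz
    have := hz.2
    rw [real_inner_smul_right, hp.2, mul_one] at this
    rw [this, one_smul]
  have hK : IsCompact {z ∈ coneSlice W s | ⟪u, z⟫ = 0} :=
    (isCompact_coneSlice hpt).inter_right (isClosed_eq (by fun_prop) continuous_const)
  filter_upwards [hK.eventually_pos_add_mul (φ := fun z => ⟪ℓ, π z⟫) (ψ := fun z => ⟪q, z⟫)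
    (by fun_prop) (by fun_prop)
    (fun z hz => by
      by_cases hπz : π z = 0
      · simp [hπz]
      · exact (hπ z hz.1 hz.2 hπz).le)
    (fun z hz h0 => by
      by_cases hπz : π z = 0
      · rwa [hπ0 z hz.1 hπz]
      · exact absurd h0 (hπ z hz.1 hz.2 hπz).ne')] with a ha z hz huz
  rw [inner_add_left, Submodule.inner_starProjection_left_eq_right, real_inner_smul_left]
  exact ha z ⟨hz, huz⟩

lemma exists_cover_active [FiniteDimensional ℝ V] (hpt : IsPointedPolyCone W s) {p : V}
    (hp : p ∈ coneSlice W s) {m : ℕ} {x' : V} (hx' : x' ∈ (ℝ ∙ p)ᗮ)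
    (hx's : ∀ u ∈ activeSet s p, ⟪u, x'⟫ < 0) {ℓ' : Fin m → V} (hℓ'x' : ∀ i, ⟪ℓ' i, x'⟫ = 0)
    (hℓ' : ∀ u ∈ activeSet s p, ∃ i, ∀ w ∈ polyCone ((ℝ ∙ p)ᗮ ⊓ W) (activeSet s p),
      ⟪u, w⟫ = 0 → w ≠ 0 → 0 < ⟪ℓ' i, w⟫) {ε : ℝ} (hε : 0 < ε) :
    ∃ ℓ : Fin m → V, (∀ i, ⟪ℓ i, p + ε • x'⟫ = 0) ∧
      ∀ u ∈ activeSet s p, ∃ i, ∀ z ∈ coneSlice W s, ⟪u, z⟫ = 0 → 0 < ⟪ℓ i, z⟫ := by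
  have hpx' : ⟪p, x'⟫ = 0 := Submodule.mem_orthogonal_singleton_iff_inner_right.mp hx'
  have hp0 : p ≠ 0 := by rintro rfl; simpa using hp.2
  -- `q` is a positive multiple of the component of `p` orthogonal to `p + ε • x'`
  set q : V := (ε * ⟪x', x'⟫) • p - ⟪p, p⟫ • x'
  have hqx : ⟪q, p + ε • x'⟫ = 0 := by
    simp only [q, inner_add_right, inner_sub_left, real_inner_smul_left, real_inner_smul_right,
      hpx', real_inner_comm p x']
    ring
  have hqp : ∀ u ∈ activeSet s p, 0 < ⟪q, p⟫ := by
    intro u hu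
    have hx'0 : x' ≠ 0 := by rintro rfl; simpa using hx's u hu
    simp only [q, inner_sub_left, real_inner_smul_left, real_inner_comm p x', hpx', mul_zero,
      sub_zero]
    have := real_inner_self_pos.mpr hx'0
    have := real_inner_self_pos.mpr hp0
    positivity
  obtain ⟨a, ha⟩ : ∃ a : ℝ, ∀ u ∈ activeSet s p, ∃ i, ∀ z ∈ coneSlice W s, ⟪u, z⟫ = 0 →
      0 < ⟪(ℝ ∙ p)ᗮ.starProjection (ℓ' i) + a • q, z⟫ :=
    ((eventually_all_finset _).mpr fun u hu => (hℓ' u hu).elim fun i hi =>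
      (eventually_cover_active_facet hpt hp hu hi (hqp u hu)).mono fun _ h => ⟨i, h⟩).exists
  refine ⟨fun i => (ℝ ∙ p)ᗮ.starProjection (ℓ' i) + a • q, fun i => ?_, ha⟩
  rw [inner_add_left, Submodule.inner_starProjection_left_eq_right, real_inner_smul_left, hqx,
    map_add, map_smul, Submodule.starProjection_orthogonalComplement_singleton_eq_zero,
    Submodule.starProjection_eq_self_iff.mpr hx', inner_add_right, real_inner_smul_right,
    hℓ'x']
  simp

lemma eventually_inner_add_smul_neg {p x' : V} (hp : ∀ u ∈ s, ⟪u, p⟫ ≤ 0)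
    (hx' : ∀ u ∈ activeSet s p, ⟪u, x'⟫ < 0) :
    ∀ᶠ ε in 𝓝[>] (0 : ℝ), ∀ u ∈ s, ⟪u, p + ε • x'⟫ < 0 := by
  refine (eventually_all_finset s).mpr fun u hu => ?_
  rcases (hp u hu).lt_or_eq with hlt | heq
  · have : ContinuousAt (fun ε : ℝ => ⟪u, p + ε • x'⟫) 0 := by fun_prop
    exact eventually_nhdsWithin_of_eventually_nhds (this.eventually (gt_mem_nhds (by simpa)))
  · filter_upwards [self_mem_nhdsWithin] with ε hε
    rw [inner_add_right, real_inner_smul_right, heq, zero_add]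
    exact mul_neg_of_pos_of_neg hε (hx' u (mem_activeSet.mpr ⟨hu, heq⟩))

lemma isPointedPolyCone_activeSet {p : V} (hp : p ∈ (coneSlice W s).extremePoints ℝ) :
    IsPointedPolyCone ((ℝ ∙ p)ᗮ ⊓ W) (activeSet s p) := by
  intro w hw h
  obtain ⟨t, rfl⟩ := exists_eq_smul_of_mem_extremePoints hp hw.2 h
  have : t • p ∈ (ℝ ∙ p) ⊓ (ℝ ∙ p)ᗮ :=
    ⟨Submodule.smul_mem _ _ (Submodule.mem_span_singleton_self p), hw.1⟩
  rwa [Submodule.inf_orthogonal_eq_bot, Submodule.mem_bot] at this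

theorem hasFacetCover_succ [FiniteDimensional ℝ V] {m : ℕ}
    (ih : ∀ (W' : Submodule ℝ V) (s' : Finset V), finrank ℝ W' = m →
      IsPointedPolyCone W' s' → ∀ x₀ ∈ W', (∀ u ∈ s', ⟪u, x₀⟫ < 0) → HasFacetCover W' s' m)
    (hW : finrank ℝ W = m + 1) (hpt : IsPointedPolyCone W s) {x₀ : V} (hx₀W : x₀ ∈ W)
    (hx₀ : ∀ u ∈ s, ⟪u, x₀⟫ < 0) : HasFacetCover W s (m + 1) := by
  have hx₀0 : x₀ ≠ 0 := by
    rintro rfl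
    have : W = ⊥ := (Submodule.eq_bot_iff W).mpr fun w hw =>
      hpt w hw fun u hu => absurd (hx₀ u hu) (by simp)
    rw [this, finrank_bot] at hW
    omega
  obtain ⟨p, hp⟩ := (isCompact_coneSlice hpt).extremePoints_nonempty
    ⟨_, smul_mem_coneSlice hpt ⟨hx₀W, fun u hu => (hx₀ u hu).le⟩ hx₀0⟩
  have hp0 : p ≠ 0 := by rintro rfl; simpa using hp.1.2
  obtain ⟨x', hx'W', hx's, ℓ', hℓ'x', hℓ'⟩ := ih ((ℝ ∙ p)ᗮ ⊓ W) (activeSet s p)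
    (Submodule.finrank_add_inf_finrank_orthogonal'
      ((Submodule.span_singleton_le_iff_mem _ _).mpr hp.1.1.1)
      (by rw [finrank_span_singleton hp0, hW, add_comm]))
    (isPointedPolyCone_activeSet hp) ((ℝ ∙ p)ᗮ.starProjection x₀)
    (starProjection_orthogonal_singleton_mem hp.1.1.1 hx₀W)
    fun u hu => by
      rw [inner_starProjection_orthogonal_singleton (mem_activeSet.mp hu).2]
      exact hx₀ u (mem_activeSet.mp hu).1
  have hpath : Tendsto (fun ε : ℝ => p + ε • x') (𝓝[>] 0) (𝓝 p) :=
    tendsto_nhdsWithin_of_tendsto_nhds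
      ((by fun_prop : Continuous fun ε : ℝ => p + ε • x').tendsto' 0 p (by simp))
  obtain ⟨ε, ⟨⟨ℓ₀, hℓ₀x, hℓ₀⟩, hεs⟩, hε⟩ :=
    ((hpath.eventually (eventually_exists_cover_inactive hpt hp)).and
      (eventually_inner_add_smul_neg hp.1.1.2 hx's) |>.and self_mem_nhdsWithin).exists
  obtain ⟨ℓ, hℓx, hℓ⟩ := exists_cover_active hpt hp.1 hx'W'.1 hx's hℓ'x' hℓ' hε
  refine ⟨p + ε • x', W.add_mem hp.1.1.1 (W.smul_mem ε hx'W'.2), hεs, Fin.cons ℓ₀ ℓ,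
    Fin.cases hℓ₀x hℓx, fun u hu => ?_⟩
  by_cases hup : ⟪u, p⟫ = 0
  · obtain ⟨i, hi⟩ := hℓ u (mem_activeSet.mpr ⟨hu, hup⟩)
    exact ⟨i.succ, by simpa using pos_of_forall_coneSlice hpt hi⟩
  · exact ⟨0, by simpa using pos_of_forall_coneSlice hpt (hℓ₀ u hu hup)⟩

theorem hasFacetCover_of_finrank_eq [FiniteDimensional ℝ V] (n : ℕ) :
    ∀ (W : Submodule ℝ V) (s : Finset V), finrank ℝ W = n → IsPointedPolyCone W s →
      ∀ x₀ ∈ W, (∀ u ∈ s, ⟪u, x₀⟫ < 0) → HasFacetCover W s n := by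
  induction n with
  | zero =>
    intro W s hW _ x₀ hx₀W hx₀
    have hx₀0 : x₀ = 0 := by
      rw [Submodule.finrank_eq_zero] at hW
      simpa [hW] using hx₀W
    exact ⟨x₀, hx₀W, hx₀, Fin.elim0, fun i => i.elim0,
      fun u hu => absurd (hx₀ u hu) (by simp [hx₀0])⟩
  | succ m ih => exact fun W s hW hpt x₀ hx₀W hx₀ => hasFacetCover_succ ih hW hpt hx₀W hx₀

end PolyCone

section Sphere

variable {n d : ℕ}

def sphPolyhedron (d : ℕ) (s : Finset (Euc (d + 1))) : Set (Euc (d + 1)) :=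
  uSphere d ∩ {y | ∀ u ∈ s, ⟪u, y⟫ ≤ 0}

lemma mem_uSphere_iff {y : Euc (d + 1)} : y ∈ uSphere d ↔ ‖y‖ = 1 :=
  mem_sphere_zero_iff_norm

lemma ne_zero_of_mem_uSphere {y : Euc (d + 1)} (hy : y ∈ uSphere d) : y ≠ 0 := by
  rintro rfl; simp [mem_uSphere_iff] at hy

lemma inner_nproj (u y : Euc n) : ⟪u, nproj y⟫ = ‖y‖⁻¹ * ⟪u, y⟫ :=
  real_inner_smul_right _ _ _

lemma nproj_mem_uSphere {y : Euc (d + 1)} (hy : y ≠ 0) : nproj y ∈ uSphere d := by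
  rw [mem_uSphere_iff, nproj, norm_smul, norm_inv, norm_norm,
    inv_mul_cancel₀ (norm_ne_zero_iff.mpr hy)]

lemma nproj_of_mem_uSphere {y : Euc (d + 1)} (hy : y ∈ uSphere d) : nproj y = y := by
  rw [nproj, mem_uSphere_iff.mp hy, inv_one, one_smul]

lemma nproj_smul {c : ℝ} (hc : 0 < c) (y : Euc n) : nproj (c • y) = nproj y := by
  simp only [nproj, norm_smul, Real.norm_of_nonneg hc.le, smul_smul]
  congr 1
  field_simp

lemma continuousAt_nproj {y : Euc n} (hy : y ≠ 0) : ContinuousAt nproj y :=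
  (continuousAt_id.norm.inv₀ (norm_ne_zero_iff.mpr hy)).smul continuousAt_id

lemma inner_nproj_pos {u y : Euc n} (h : 0 < ⟪u, y⟫) : 0 < ⟪u, nproj y⟫ := by
  have hy : y ≠ 0 := by rintro rfl; simp at h
  rw [inner_nproj]; exact mul_pos (by positivity) h

lemma inner_nproj_neg {u y : Euc n} (h : ⟪u, y⟫ < 0) : ⟪u, nproj y⟫ < 0 := by
  have hy : y ≠ 0 := by rintro rfl; simp at h
  rw [inner_nproj]; exact mul_neg_of_pos_of_neg (by positivity) h

lemma inner_neg_of_mem_sphInt {K : Set (Euc (d + 1))} {u : Euc (d + 1)} (hu : u ≠ 0)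
    (hK : ∀ y ∈ K, ⟪u, y⟫ ≤ 0) {y : Euc (d + 1)} (hy : y ∈ sphInt d K) : ⟪u, y⟫ < 0 := by
  obtain ⟨hyS, U, hU, hyU, hUK⟩ := hy
  by_contra! h0
  -- push `y` slightly towards `u` inside `U`
  have hpush : Tendsto (fun δ : ℝ => nproj (y + δ • u)) (𝓝 0) (𝓝 y) := by
    have := (continuousAt_nproj (ne_zero_of_mem_uSphere hyS)).tendsto.comp
      ((by fun_prop : Continuous fun δ : ℝ => y + δ • u).tendsto' 0 y (by simp))
    rwa [nproj_of_mem_uSphere hyS] at this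
  obtain ⟨δ, hδU, hδ⟩ := (eventually_nhdsWithin_of_eventually_nhds
    (hpush.eventually (hU.mem_nhds hyU)) |>.and self_mem_nhdsWithin).exists (f := 𝓝[>] 0)
  have hpos : 0 < ⟪u, y + δ • u⟫ := by
    rw [inner_add_right, real_inner_smul_right]
    have := real_inner_self_pos.mpr hu
    positivity
  have hne : y + δ • u ≠ 0 := by rintro h; simp [h] at hpos
  exact (inner_nproj_pos hpos).not_ge (hK _ (hUK ⟨hδU, nproj_mem_uSphere hne⟩))

lemma mem_sphInt_sphPolyhedron {s : Finset (Euc (d + 1))} {x : Euc (d + 1)}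
    (hx : x ∈ uSphere d) (h : ∀ u ∈ s, ⟪u, x⟫ < 0) : x ∈ sphInt d (sphPolyhedron d s) := by
  refine ⟨hx, ⋂ u ∈ s, {z | ⟪u, z⟫ < 0},
    isOpen_biInter_finset fun u _ => isOpen_lt (by fun_prop) continuous_const,
    mem_iInter₂.mpr h, fun z ⟨hzU, hzS⟩ => ⟨hzS, fun u hu => (mem_iInter₂.mp hzU u hu).le⟩⟩

lemma isPointedPolyCone_top {s : Finset (Euc (d + 1))} {c : Euc (d + 1)}
    (hc : sphPolyhedron d s ⊆ openHemi d c) : IsPointedPolyCone ⊤ s := by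
  intro w _ hw
  by_contra hw0
  have hpos : ∀ y : Euc (d + 1), y ≠ 0 → (∀ u ∈ s, ⟪u, y⟫ = 0) → 0 < ‖y‖⁻¹ * ⟪c, y⟫ :=
    fun y hy h => inner_nproj c y ▸
      (hc ⟨nproj_mem_uSphere hy, fun u hu => by rw [inner_nproj, h u hu, mul_zero]⟩).2
  have h₁ := hpos w hw0 hw
  have h₂ := hpos (-w) (neg_ne_zero.mpr hw0) fun u hu => by rw [inner_neg_right, hw u hu, neg_zero]
  rw [norm_neg, inner_neg_right, mul_neg] at h₂
  linarith

lemma exists_forall_inner_neg_of_sphConvex {F : Set (Euc (d + 1))} (hF : SphConvex d F)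
    (hne : F.Nonempty) (t : Finset (Euc (d + 1))) (hle : ∀ y ∈ F, ∀ u ∈ t, ⟪u, y⟫ ≤ 0)
    (hlt : ∀ u ∈ t, ∃ y ∈ F, ⟪u, y⟫ < 0) : ∃ z ∈ F, ∀ u ∈ t, ⟪u, z⟫ < 0 := by
  classical
  induction t using Finset.induction_on with
  | empty => exact hne.imp fun z hz => ⟨hz, by simp⟩
  | insert a t _ ih =>
    obtain ⟨z, hzF, hz⟩ := ih (fun y hy u hu => hle y hy u (Finset.mem_insert_of_mem hu))
      fun u hu => hlt u (Finset.mem_insert_of_mem hu)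
    obtain ⟨y, hyF, hy⟩ := hlt a (Finset.mem_insert_self a t)
    refine ⟨_, hF.2.2 z hzF y hyF ⟨1 / 2, ⟨by norm_num, by norm_num⟩, rfl⟩,
      fun u hu => inner_nproj_neg ?_⟩
    rw [inner_add_right, real_inner_smul_right, real_inner_smul_right]
    rcases Finset.mem_insert.mp hu with rfl | hu
    · linarith [hle z hzF u (Finset.mem_insert_self u t)]
    · linarith [hz u hu, hle y hyF u (Finset.mem_insert_of_mem hu)]

lemma sphPolyhedron_subset_of_isSphFace {s : Finset (Euc (d + 1))} {F : Set (Euc (d + 1))}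
    (hF : IsSphFace d (sphPolyhedron d s) F) {z : Euc (d + 1)} (hzF : z ∈ F)
    (hz : ∀ u ∈ s, ⟪u, z⟫ < 0) : sphPolyhedron d s ⊆ F := by
  intro y hy
  have hzS := (hF.1 hzF).1
  -- extend the arc from `y` through `z` slightly beyond `z`
  obtain ⟨ε, hεs, hε⟩ : ∃ ε : ℝ, (∀ u ∈ s, ⟪u, (1 + ε) • z - ε • y⟫ < 0) ∧ 0 < ε :=
    (eventually_nhdsWithin_of_eventually_nhds ((eventually_all_finset s).mpr fun u hu =>
      (by fun_prop : ContinuousAt (fun ε : ℝ => ⟪u, (1 + ε) • z - ε • y⟫) 0).eventually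
        (gt_mem_nhds (by simpa using hz u hu))) |>.and self_mem_nhdsWithin).exists
      (f := 𝓝[>] 0)
  set w := (1 + ε) • z - ε • y
  have hw : 1 ≤ ‖w‖ := by
    have := norm_sub_norm_le ((1 + ε) • z) (ε • y)
    rw [norm_smul, norm_smul, mem_uSphere_iff.mp hzS, mem_uSphere_iff.mp hy.1,
      Real.norm_of_nonneg (by positivity), Real.norm_of_nonneg hε.le] at this
    linarith
  have hw0 : w ≠ 0 := norm_pos_iff.mp (by linarith)
  have hwP : nproj w ∈ sphPolyhedron d s :=
    ⟨nproj_mem_uSphere hw0, fun u hu => (inner_nproj_neg (hεs u hu)).le⟩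
  have hcomb : ∀ N : ℝ, 0 < N → (1 - N / (N + ε)) • y + (N / (N + ε)) • (N⁻¹ • w) =
      ((1 + ε) / (N + ε)) • z := by
    intro N hN
    have : N + ε ≠ 0 := by positivity
    simp only [w]
    match_scalars
    · field_simp
      ring
    · field_simp
  have hseg : z ∈ sphOpenSeg y (nproj w) :=
    ⟨‖w‖ / (‖w‖ + ε), ⟨by positivity, (div_lt_one (by positivity)).mpr (by linarith)⟩, by
      simp only [nproj] at hcomb ⊢
      rw [hcomb ‖w‖ (by linarith), ← nproj, nproj_smul (by positivity), nproj_of_mem_uSphere hzS]⟩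
  exact hF.2.2 y hy (nproj w) hwP ⟨z, hseg, hzF⟩
    ⟨0, ⟨le_rfl, zero_le_one⟩, by simp [nproj_of_mem_uSphere hy.1]⟩

lemma exists_inner_eq_zero_of_isSphFace {s : Finset (Euc (d + 1))} {F : Set (Euc (d + 1))}
    (hF : IsSphFace d (sphPolyhedron d s) F) (hne : F.Nonempty) (hFP : F ≠ sphPolyhedron d s) :
    ∃ u ∈ s, ∀ y ∈ F, ⟪u, y⟫ = 0 := by
  by_contra! h
  have hle : ∀ y ∈ F, ∀ u ∈ s, ⟪u, y⟫ ≤ 0 := fun y hy => (hF.1 hy).2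
  obtain ⟨z, hzF, hz⟩ := exists_forall_inner_neg_of_sphConvex hF.2.1 hne s hle fun u hu =>
    (h u hu).imp fun y hy => ⟨hy.1, (hle y hy.1 u hu).lt_of_ne hy.2⟩
  exact hFP (hF.1.antisymm (sphPolyhedron_subset_of_isSphFace hF hzF hz))

lemma exists_mem_uSphere_inner_eq_zero (hd : 0 < d) (x : Euc (d + 1)) :
    ∃ w ∈ uSphere d, ⟪w, x⟫ = 0 := by
  have hrank : finrank ℝ (ℝ ∙ x)ᗮ ≠ 0 := by
    have h₁ := Submodule.finrank_add_finrank_orthogonal (ℝ ∙ x)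
    have h₂ := finrank_span_le_card (R := ℝ) ({x} : Set (Euc (d + 1)))
    rw [finrank_euclideanSpace_fin] at h₁
    simp only [Set.toFinset_singleton, Finset.card_singleton] at h₂
    omega
  obtain ⟨w, hw, hw0⟩ := Submodule.exists_mem_ne_zero_of_ne_bot (p := (ℝ ∙ x)ᗮ)
    fun h => hrank (by simp [h])
  refine ⟨nproj w, nproj_mem_uSphere hw0, ?_⟩
  rw [nproj, real_inner_smul_left, real_inner_comm,
    Submodule.mem_orthogonal_singleton_iff_inner_right.mp hw, mul_zero]

lemma exists_unit_poles {ι : Type*} (hd : 0 < d) {x : Euc (d + 1)} {ℓ : ι → Euc (d + 1)}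
    (hℓx : ∀ i, ⟪ℓ i, x⟫ = 0) : ∃ v : ι → Euc (d + 1), (∀ i, v i ∈ uSphere d ∧ ⟪v i, x⟫ = 0) ∧
      ∀ i y, 0 < ⟪ℓ i, y⟫ → 0 < ⟪v i, y⟫ := by
  classical
  obtain ⟨w, hw, hwx⟩ := exists_mem_uSphere_inner_eq_zero hd x
  refine ⟨fun i => if ℓ i = 0 then w else nproj (ℓ i), fun i => ?_, fun i y hy => ?_⟩
  · dsimp only
    split_ifs with h
    · exact ⟨hw, hwx⟩
    · refine ⟨nproj_mem_uSphere h, ?_⟩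
      rw [nproj, real_inner_smul_left, hℓx, mul_zero]
  · have hℓ0 : ℓ i ≠ 0 := by rintro h; simp [h] at hy
    dsimp only
    rw [if_neg hℓ0, nproj, real_inner_smul_left]
    exact mul_pos (by positivity) hy

end Sphere

/-- For any convex polytope `P ⊆ S^d`, `d > 2`, there are an interior point `x` of `P`
and `d + 1` open hemispheres whose boundary great spheres all contain `x` such that
every proper face of `P` is contained in one of the hemispheres. -/
theorem stmt14 (d : ℕ) (hd : 2 < d) (P : Set (Euc (d + 1))) (hP : IsSphPolytope d P) :
    ∃ x ∈ sphInt d P, ∃ v : Fin (d + 1) → Euc (d + 1),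
      (∀ i, v i ∈ uSphere d ∧ ⟪v i, x⟫ = 0) ∧
      ∀ F, IsSphFace d P F → F ≠ P → ∃ i, F ⊆ openHemi d (v i) := by
  obtain ⟨⟨-, ⟨-, ⟨c, hcS, hc⟩, -⟩, ⟨y₀, hy₀⟩⟩, s, hs, rfl⟩ := hP
  have hpt : IsPointedPolyCone ⊤ s := isPointedPolyCone_top hc
  obtain ⟨x, -, hxs, ℓ, hℓx, hℓ⟩ := hasFacetCover_of_finrank_eq (d + 1) ⊤ s
    (by rw [finrank_top, finrank_euclideanSpace_fin]) hpt y₀ trivial fun u hu =>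
      inner_neg_of_mem_sphInt (ne_zero_of_mem_uSphere (hs u hu)) (fun y hy => hy.2 u hu) hy₀
  have hx0 : x ≠ 0 := by
    rintro rfl
    exact ne_zero_of_mem_uSphere hcS (hpt c trivial fun u hu => absurd (hxs u hu) (by simp))
  obtain ⟨v, hv, hvℓ⟩ := exists_unit_poles (by omega) (x := nproj x) fun i => by
    rw [inner_nproj, hℓx, mul_zero]
  refine ⟨nproj x, mem_sphInt_sphPolyhedron (nproj_mem_uSphere hx0)
    fun u hu => inner_nproj_neg (hxs u hu), v, hv, fun F hF hFP => ?_⟩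
  rcases F.eq_empty_or_nonempty with rfl | hne
  · exact ⟨0, empty_subset _⟩
  obtain ⟨u, hu, hFu⟩ := exists_inner_eq_zero_of_isSphFace hF hne hFP
  obtain ⟨i, hi⟩ := hℓ u hu
  refine ⟨i, fun y hy => ⟨(hF.1 hy).1, hvℓ i y ?_⟩⟩
  exact hi y ⟨trivial, (hF.1 hy).2⟩ (hFu y hy) (ne_zero_of_mem_uSphere (hF.1 hy).1)
end
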